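/- arXiv:2011.01732 — 4 statements merged into one kernel-verified Lean document; each statement's English description precedes it below -/
import Mathlib

section
/- Let M be a metric space with at least two points, T a total order on M, and s ≥ 1 an integer. Then OR_{M,T}(s) = s if and only if (M,T) admits snakes on s+1 points of arbitrarily large elongation, i.e. for every E > 0 there exist points x_1 <_T x_2 <_T ... <_T x_{s+1} whose diameter a and width b satisfy a/b > E (where the width is 0 interpreted as infinite elongation). -/
open scoped Classical

noncomputable def pathLen {α : Type*} (d : α → α → ℝ) : List α → ℝ
  | [] => 0
  | [_] => 0
  | a :: b :: l => d a b + pathLen d (b :: l)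

noncomputable def lopt {α : Type*} (d : α → α → ℝ) (X : Finset α) : ℝ :=
  sInf {r : ℝ | ∃ l : List α, l.Nodup ∧ l.toFinset = X ∧ pathLen d l = r}

noncomputable def lord {α : Type*} (d : α → α → ℝ) (T : LinearOrder α) (X : Finset α) : ℝ :=
  sInf {r : ℝ | ∃ l : List α, l.Nodup ∧ l.toFinset = X ∧ List.Pairwise T.lt l ∧ pathLen d l = r}

noncomputable def ORd {α : Type*} (d : α → α → ℝ) (T : LinearOrder α) (k : ℕ) : ℝ :=
  sSup {r : ℝ | ∃ X : Finset α, 2 ≤ X.card ∧ X.card ≤ k + 1 ∧ r = lord d T X / lopt d X}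

def IsSnake {α : Type*} (T : LinearOrder α) {n : ℕ} (x : Fin n → α) : Prop :=
  ∀ i j : Fin n, i < j → T.lt (x i) (x j)

noncomputable def snakeDiam {α : Type*} (d : α → α → ℝ) {n : ℕ} (x : Fin n → α) : ℝ :=
  sSup {r : ℝ | ∃ i j : Fin n, r = d (x i) (x j)}

noncomputable def snakeWidth {α : Type*} (d : α → α → ℝ) {n : ℕ} (x : Fin n → α) : ℝ :=
  sSup {r : ℝ | ∃ i j : Fin n, i.val % 2 = j.val % 2 ∧ r = d (x i) (x j)}

/-!
Consecutive points of a sorted set are at most `lopt` apart, so `OR(s) ≤ s`.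

If a snake has diameter `a` and width `b`, every step of its sorted path has length at least
`a - 2b`, while the tour through the even points followed by the odd points backwards has length
at most `a + s b`; hence snakes of large elongation push the ratio up to `s`.

Conversely, if an `(s+1)`-point set has ratio above `s - ε`, every step of its sorted path is
longer than `(1 - ε) lopt`. Measuring arc length along an optimal path maps the points into
`[0, lopt]` without shrinking distances, so consecutive points land within `ε lopt` of opposite
ends of this interval. Points of equal parity are then `ε lopt`-close, whereas the diameter
exceeds `(1 - ε) lopt`.
-/

section PathLength

variable {α : Type*} (d : α → α → ℝ)

theorem pathLen_ofFn : ∀ {n : ℕ} (x : Fin (n + 1) → α),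
    pathLen d (List.ofFn x) = ∑ i : Fin n, d (x i.castSucc) (x i.succ)
  | 0, _ => rfl
  | n + 1, x => by
    have h := pathLen_ofFn (fun i : Fin (n + 1) => x i.succ)
    simp only [List.ofFn_succ] at h ⊢
    rw [pathLen, h, Fin.sum_univ_succ]
    rfl

theorem pathLen_eq_sum_range_getD (p : α) : ∀ l : List α,
    pathLen d l = ∑ i ∈ Finset.range (l.length - 1), d (l.getD i p) (l.getD (i + 1) p)
  | [] => rfl
  | [_] => rfl
  | a :: b :: l => by
    rw [pathLen, pathLen_eq_sum_range_getD p (b :: l)]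
    simp [Finset.sum_range_succ' _ (l.length), add_comm]

-- Any instance: the `toFinset` inside `lord` uses the decidable equality coming from `T`,
-- the one inside `lopt` the classical one.
theorem toFinset_eq_iff [DecidableEq α] {l : List α} {X : Finset α} :
    l.toFinset = X ↔ ∀ y, y ∈ l ↔ y ∈ X := by
  simp only [Finset.ext_iff, List.mem_toFinset]

theorem finite_setOf_pathLen (X : Finset α) :
    {r : ℝ | ∃ l : List α, l.Nodup ∧ l.toFinset = X ∧ pathLen d l = r}.Finite := by
  refine ((X.toList.permutations.finite_toSet).image (pathLen d)).subset ?_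
  rintro r ⟨l, hl, rfl, rfl⟩
  exact ⟨l, List.mem_permutations.2 (List.perm_of_nodup_nodup_toFinset_eq hl
    (Finset.nodup_toList _) (Finset.toList_toFinset _).symm), rfl⟩

theorem exists_pathLen_eq_lopt (X : Finset α) :
    ∃ l : List α, l.Nodup ∧ (∀ y, y ∈ l ↔ y ∈ X) ∧ pathLen d l = lopt d X := by
  have hne : {r : ℝ | ∃ l : List α, l.Nodup ∧ l.toFinset = X ∧ pathLen d l = r}.Nonempty :=
    ⟨_, X.toList, X.nodup_toList, X.toList_toFinset, rfl⟩
  obtain ⟨l, hl, hX, hlen⟩ := hne.csInf_mem (finite_setOf_pathLen d X)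
  exact ⟨l, hl, toFinset_eq_iff.1 hX, hlen⟩

theorem lopt_le_pathLen {X : Finset α} {l : List α} (hl : l.Nodup)
    (hX : ∀ y, y ∈ l ↔ y ∈ X) :
    lopt d X ≤ pathLen d l :=
  csInf_le (finite_setOf_pathLen d X).bddBelow ⟨l, hl, toFinset_eq_iff.2 hX, rfl⟩

theorem lord_eq_pathLen (T : LinearOrder α) {X : Finset α} {l : List α} (hl : l.Nodup)
    (hX : ∀ y, y ∈ l ↔ y ∈ X) (hT : l.Pairwise T.lt) : lord d T X = pathLen d l := by
  let := T
  refine IsLeast.csInf_eq ⟨⟨l, hl, toFinset_eq_iff.2 hX, hT, rfl⟩, ?_⟩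
  rintro _ ⟨l', hl', hX', hT', rfl⟩
  have hperm : l'.Perm l := (List.perm_ext_iff_of_nodup hl' hl).2 fun y =>
    (toFinset_eq_iff.1 hX' y).trans (hX y).symm
  rw [List.Perm.eq_of_pairwise (fun _ _ _ _ h h' => (lt_asymm h h').elim) hT' hT hperm]

end PathLength

section Snake

variable {α : Type*} {T : LinearOrder α}

theorem IsSnake.injective {n : ℕ} {x : Fin n → α} (hx : IsSnake T x) :
    Function.Injective x := by
  let := T
  exact StrictMono.injective hx

theorem IsSnake.lord_eq_sum (d : α → α → ℝ) {n : ℕ} {x : Fin (n + 1) → α}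
    (hx : IsSnake T x) {X : Finset α} (hX : ∀ y, y ∈ X ↔ ∃ i, x i = y) :
    lord d T X = ∑ i : Fin n, d (x i.castSucc) (x i.succ) := by
  rw [lord_eq_pathLen d T (List.nodup_ofFn.2 hx.injective)
    (fun y => List.mem_ofFn.trans (hX y).symm) (List.pairwise_ofFn.2 hx), pathLen_ofFn]

theorem exists_isSnake_of_card_eq (T : LinearOrder α) (X : Finset α) {n : ℕ} (h : X.card = n) :
    ∃ x : Fin n → α, IsSnake T x ∧ ∀ y, y ∈ X ↔ ∃ i, x i = y := by
  let := T
  refine ⟨X.orderEmbOfFin h, (X.orderEmbOfFin h).strictMono, fun y => ?_⟩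
  rw [← Finset.mem_coe, ← Finset.range_orderEmbOfFin X h, Set.mem_range]

end Snake

section Metric

variable {M : Type*} [MetricSpace M]

theorem exists_coord_of_pathLen (l : List M) :
    ∃ u : M → ℝ, (∀ y ∈ l, u y ∈ Set.Icc 0 (pathLen dist l)) ∧
      ∀ y ∈ l, ∀ z ∈ l, dist y z ≤ |u y - u z| := by
  rcases l with _ | ⟨p, t⟩
  · exact ⟨0, by simp⟩
  set l := p :: t
  set f : ℕ → M := fun k => l.getD k p
  refine ⟨fun y => ∑ i ∈ Finset.range (l.idxOf y), dist (f i) (f (i + 1)), ?_, ?_⟩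
  · intro y hy
    refine ⟨Finset.sum_nonneg fun _ _ => dist_nonneg, ?_⟩
    rw [pathLen_eq_sum_range_getD dist p]
    refine Finset.sum_le_sum_of_subset_of_nonneg (Finset.range_mono ?_) fun _ _ _ => dist_nonneg
    have := List.idxOf_lt_length_iff.2 hy
    omega
  · have hf : ∀ y ∈ l, f (l.idxOf y) = y := fun y hy => by
      simp only [f, List.getD_eq_getElem _ _ (List.idxOf_lt_length_iff.2 hy),
        List.getElem_idxOf]
    have key : ∀ y ∈ l, ∀ z ∈ l, l.idxOf y ≤ l.idxOf z → dist y z ≤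
        ∑ i ∈ Finset.range (l.idxOf z), dist (f i) (f (i + 1)) -
          ∑ i ∈ Finset.range (l.idxOf y), dist (f i) (f (i + 1)) := by
      intro y hy z hz hyz
      rw [← Finset.sum_range_add_sum_Ico _ hyz, add_sub_cancel_left]
      calc dist y z = dist (f (l.idxOf y)) (f (l.idxOf z)) := by rw [hf y hy, hf z hz]
        _ ≤ _ := dist_le_Ico_sum_dist f hyz
    intro y hy z hz
    rcases le_total (l.idxOf y) (l.idxOf z) with h | h
    · rw [abs_sub_comm]
      exact (key y hy z hz h).trans (le_abs_self _)
    · rw [dist_comm]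
      exact (key z hz y hy h).trans (le_abs_self _)

theorem dist_le_lopt {X : Finset M} {y z : M} (hy : y ∈ X) (hz : z ∈ X) :
    dist y z ≤ lopt dist X := by
  obtain ⟨l, -, hX, hl⟩ := exists_pathLen_eq_lopt dist X
  obtain ⟨u, hu, hdist⟩ := exists_coord_of_pathLen l
  rw [← hX] at hy hz
  obtain ⟨hy₀, hy₁⟩ := hu y hy
  obtain ⟨hz₀, hz₁⟩ := hu z hz
  rw [← hl]
  exact (hdist y hy z hz).trans (abs_sub_le_iff.2 ⟨by linarith, by linarith⟩)

theorem lopt_pos {X : Finset M} (hX : 2 ≤ X.card) : 0 < lopt dist X := by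
  obtain ⟨y, hy, z, hz, hyz⟩ := Finset.one_lt_card.1 hX
  exact (dist_pos.2 hyz).trans_le (dist_le_lopt hy hz)

theorem lord_div_lopt_le (T : LinearOrder M) {X : Finset M} (hX₂ : 2 ≤ X.card) :
    lord dist T X / lopt dist X ≤ X.card - 1 := by
  obtain ⟨m, hm⟩ : ∃ m, X.card = m + 1 := ⟨X.card - 1, by omega⟩
  obtain ⟨x, hx, hX⟩ := exists_isSnake_of_card_eq T X hm
  have hmem : ∀ i, x i ∈ X := fun i => (hX _).2 ⟨i, rfl⟩
  rw [div_le_iff₀ (lopt_pos hX₂), hm, Nat.cast_succ, add_sub_cancel_right,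
    hx.lord_eq_sum dist hX]
  calc ∑ i : Fin m, dist (x i.castSucc) (x i.succ)
      ≤ ∑ _i : Fin m, lopt dist X := Finset.sum_le_sum fun i _ => dist_le_lopt (hmem _) (hmem _)
    _ = m * lopt dist X := by simp

theorem lord_div_lopt_le_of_card_le (T : LinearOrder M) {s : ℕ} {X : Finset M}
    (hX : 2 ≤ X.card) (hXs : X.card ≤ s + 1) : lord dist T X / lopt dist X ≤ s := by
  refine (lord_div_lopt_le T hX).trans ?_
  rw [sub_le_iff_le_add]
  exact_mod_cast hXs

theorem lord_div_lopt_le_ORd (T : LinearOrder M) {s : ℕ} {X : Finset M} (hX : 2 ≤ X.card)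
    (hXs : X.card ≤ s + 1) : lord dist T X / lopt dist X ≤ ORd dist T s :=
  le_csSup ⟨s, by rintro _ ⟨Y, hY, hYs, rfl⟩; exact lord_div_lopt_le_of_card_le T hY hYs⟩
    ⟨X, hX, hXs, rfl⟩

theorem ORd_le (T : LinearOrder M) (s : ℕ) : ORd dist T s ≤ s :=
  Real.sSup_le (by rintro _ ⟨Y, hY, hYs, rfl⟩; exact lord_div_lopt_le_of_card_le T hY hYs)
    (Nat.cast_nonneg s)

end Metric

section SnakeShape

variable {α : Type*} (d : α → α → ℝ) {n : ℕ} (x : Fin n → α)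

theorem finite_setOf_snakeDiam : {r : ℝ | ∃ i j : Fin n, r = d (x i) (x j)}.Finite :=
  (Set.finite_range fun p : Fin n × Fin n => d (x p.1) (x p.2)).subset
    (by rintro _ ⟨i, j, rfl⟩; exact ⟨(i, j), rfl⟩)

theorem le_snakeDiam (i j : Fin n) : d (x i) (x j) ≤ snakeDiam d x :=
  le_csSup (finite_setOf_snakeDiam d x).bddAbove ⟨i, j, rfl⟩

theorem le_snakeWidth {i j : Fin n} (hij : i.val % 2 = j.val % 2) :
    d (x i) (x j) ≤ snakeWidth d x :=
  le_csSup ((finite_setOf_snakeDiam d x).subset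
    (by rintro _ ⟨i, j, -, rfl⟩; exact ⟨i, j, rfl⟩)).bddAbove ⟨i, j, hij, rfl⟩

theorem exists_snakeDiam_eq [NeZero n] : ∃ i j : Fin n, snakeDiam d x = d (x i) (x j) :=
  Set.Nonempty.csSup_mem (s := {r : ℝ | ∃ i j : Fin n, r = d (x i) (x j)}) ⟨_, 0, 0, rfl⟩
    (finite_setOf_snakeDiam d x)

theorem snakeWidth_le [NeZero n] {c : ℝ}
    (h : ∀ i j : Fin n, i.val % 2 = j.val % 2 → d (x i) (x j) ≤ c) : snakeWidth d x ≤ c :=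
  csSup_le ⟨_, 0, 0, rfl, rfl⟩ (by rintro _ ⟨i, j, hij, rfl⟩; exact h i j hij)

end SnakeShape

def zigzag (s : ℕ) (k : Fin (s + 1)) : Fin (s + 1) :=
  if h : k.val ≤ s / 2 then ⟨2 * k.val, by omega⟩ else ⟨2 * (s - k.val) + 1, by omega⟩

theorem zigzag_injective (s : ℕ) : Function.Injective (zigzag s) := by
  intro i j h
  simp only [zigzag] at h
  split_ifs at h <;> simp only [Fin.mk.injEq] at h <;> omega

theorem zigzag_val_mod_two {s : ℕ} {k : Fin s} (hk : k.val ≠ s / 2) :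
    (zigzag s k.castSucc).val % 2 = (zigzag s k.succ).val % 2 := by
  simp only [zigzag, Fin.val_castSucc, Fin.val_succ]
  split_ifs <;> dsimp only <;> omega

theorem iff_of_val_mod_two_eq {n : ℕ} {p : Fin (n + 1) → Prop}
    (h : ∀ i : Fin n, p i.succ ↔ ¬ p i.castSucc) {i j : Fin (n + 1)}
    (hij : i.val % 2 = j.val % 2) : p i ↔ p j := by
  have key : ∀ k : Fin (n + 1), p k ↔ (p 0 ↔ k.val % 2 = 0) := by
    refine Fin.induction (by simp) fun k hk => ?_
    have hsucc : (k.val + 1) % 2 = 0 ↔ ¬ k.val % 2 = 0 := by omega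
    rw [h k, hk, Fin.val_succ, Fin.val_castSucc, hsucc]
    tauto
  rw [key i, key j, hij]

theorem abs_sub_le_of_val_mod_two_eq {n : ℕ} {u : Fin (n + 2) → ℝ} {L ε : ℝ}
    (hε : ε ≤ 1 / 2) (hu : ∀ i, u i ∈ Set.Icc 0 L)
    (hgap : ∀ i : Fin (n + 1), (1 - ε) * L < |u i.castSucc - u i.succ|)
    {i j : Fin (n + 2)} (hij : i.val % 2 = j.val % 2) : |u i - u j| ≤ ε * L := by
  have hL : 0 ≤ L := (hu 0).1.trans (hu 0).2
  have hsides : ∀ e : Fin (n + 1), (u e.castSucc < ε * L ∧ (1 - ε) * L < u e.succ) ∨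
      (u e.succ < ε * L ∧ (1 - ε) * L < u e.castSucc) := by
    intro e
    obtain ⟨h₀, h₁⟩ := hu e.castSucc
    obtain ⟨h₀', h₁'⟩ := hu e.succ
    rcases lt_abs.1 (hgap e) with h | h
    · right; constructor <;> linarith
    · left; constructor <;> linarith
  have hclass : ∀ k, u k < ε * L ∨ (1 - ε) * L < u k := by
    intro k
    rcases Fin.eq_castSucc_or_eq_last k with ⟨e, rfl⟩ | rfl
    · exact (hsides e).imp And.left And.right
    · rw [← Fin.succ_last]
      exact (hsides (Fin.last n)).symm.imp And.left And.right
  have hεL : ε * L ≤ (1 - ε) * L := by nlinarith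
  have hsame : u i < ε * L ↔ u j < ε * L := by
    refine iff_of_val_mod_two_eq (p := fun k => u k < ε * L) (fun e => ?_) hij
    rcases hsides e with h | h
    · exact ⟨fun h' => by linarith, fun h' => absurd h.1 h'⟩
    · exact ⟨fun _ h' => by linarith, fun _ => h.1⟩
  obtain ⟨hi₀, hi₁⟩ := hu i
  obtain ⟨hj₀, hj₁⟩ := hu j
  rw [abs_sub_le_iff]
  rcases hclass i with hi | hi <;> rcases hclass j with hj | hj
  · constructor <;> linarith
  · exact absurd (hsame.1 hi) (by linarith)
  · exact absurd (hsame.2 hj) (by linarith)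
  · constructor <;> linarith

theorem lt_of_card_sub_mul_lt_sum {ι : Type*} [Fintype ι] {f : ι → ℝ} {c ε : ℝ}
    (hf : ∀ i, f i ≤ c) (h : (Fintype.card ι - ε) * c < ∑ i, f i) (i : ι) :
    (1 - ε) * c < f i := by
  have hrest : ∑ j ∈ Finset.univ.erase i, f j ≤ (Fintype.card ι - 1) * c := by
    have := Finset.sum_le_card_nsmul (Finset.univ.erase i) f c fun j _ => hf j
    rwa [Finset.card_erase_of_mem (Finset.mem_univ i), Finset.card_univ, nsmul_eq_mul,
      Nat.cast_pred (Fintype.card_pos_iff.2 ⟨i⟩)] at this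
  rw [← Finset.add_sum_erase _ _ (Finset.mem_univ i)] at h
  linarith

section SnakeMetric

variable {M : Type*} [MetricSpace M]

theorem snakeWidth_nonneg {n : ℕ} (x : Fin (n + 1) → M) : 0 ≤ snakeWidth dist x := by
  simpa using le_snakeWidth dist x (i := 0) (j := 0) rfl

theorem snakeDiam_sub_two_mul_snakeWidth_le {n : ℕ} (x : Fin (n + 1) → M) (i : Fin n) :
    snakeDiam dist x - 2 * snakeWidth dist x ≤ dist (x i.castSucc) (x i.succ) := by
  have hcs : (i.castSucc : Fin (n + 1)).val = i.val := Fin.val_castSucc i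
  have hs : (i.succ : Fin (n + 1)).val = i.val + 1 := Fin.val_succ i
  have hdetour : ∀ p q : Fin (n + 1), p.val % 2 = i.val % 2 → q.val % 2 = (i.val + 1) % 2 →
      dist (x p) (x q) ≤ snakeWidth dist x + dist (x i.castSucc) (x i.succ) + snakeWidth dist x :=
    fun p q hp hq => (dist_triangle4 _ (x i.castSucc) (x i.succ) _).trans
      (add_le_add (add_le_add_left (le_snakeWidth dist x (by omega)) _)
        (le_snakeWidth dist x (by omega)))
  obtain ⟨p, q, hpq⟩ := exists_snakeDiam_eq dist x
  rw [hpq]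
  rcases (by omega : p.val % 2 = q.val % 2 ∨ (p.val % 2 = i.val % 2 ∧
      q.val % 2 = (i.val + 1) % 2) ∨ (q.val % 2 = i.val % 2 ∧ p.val % 2 = (i.val + 1) % 2))
    with h | ⟨hp, hq⟩ | ⟨hq, hp⟩
  · linarith [le_snakeWidth dist x h, snakeWidth_nonneg x,
      dist_nonneg (x := x i.castSucc) (y := x i.succ)]
  · linarith [hdetour p q hp hq]
  · linarith [hdetour q p hq hp, dist_comm (x p) (x q)]

theorem lopt_le_snakeDiam_add {s : ℕ} {x : Fin (s + 1) → M} (hx : Function.Injective x)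
    {X : Finset M} (hX : ∀ y, y ∈ X ↔ ∃ i, x i = y) :
    lopt dist X ≤ snakeDiam dist x + s * snakeWidth dist x := by
  set a := snakeDiam dist x
  set b := snakeWidth dist x
  have ha : 0 ≤ a := dist_self (x 0) ▸ le_snakeDiam dist x 0 0
  have hz : Function.Bijective (zigzag s) := Finite.injective_iff_bijective.1 (zigzag_injective s)
  have hmem : ∀ y, y ∈ List.ofFn (x ∘ zigzag s) ↔ y ∈ X := by
    intro y
    rw [List.mem_ofFn, hX]
    exact (hz.2.exists (p := fun k => x k = y)).symm
  have hedge : ∀ k : Fin s, dist (x (zigzag s k.castSucc)) (x (zigzag s k.succ)) ≤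
      b + if k.val = s / 2 then a else 0 := by
    intro k
    split_ifs with hk
    · linarith [le_snakeDiam dist x (zigzag s k.castSucc) (zigzag s k.succ), snakeWidth_nonneg x]
    · simpa using le_snakeWidth dist x (zigzag_val_mod_two hk)
  calc lopt dist X
      ≤ pathLen dist (List.ofFn (x ∘ zigzag s)) :=
        lopt_le_pathLen dist (List.nodup_ofFn.2 (hx.comp hz.1)) hmem
    _ = ∑ k : Fin s, dist (x (zigzag s k.castSucc)) (x (zigzag s k.succ)) := pathLen_ofFn dist _
    _ ≤ ∑ k : Fin s, (b + if k.val = s / 2 then a else 0) :=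
        Finset.sum_le_sum fun k _ => hedge k
    _ = s * b + if s / 2 < s then a else 0 := by
        rw [Finset.sum_add_distrib,
          Fin.sum_univ_eq_sum_range (fun k => if k = s / 2 then a else 0), Finset.sum_ite_eq']
        simp
    _ ≤ a + s * b := by split_ifs <;> linarith

theorem IsSnake.lt_dist_of_lord_gt {T : LinearOrder M} {s : ℕ} {x : Fin (s + 1) → M}
    (hx : IsSnake T x) {X : Finset M} (hX : ∀ y, y ∈ X ↔ ∃ i, x i = y) {ε : ℝ}
    (h : (s - ε) * lopt dist X < lord dist T X) (i : Fin s) :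
    (1 - ε) * lopt dist X < dist (x i.castSucc) (x i.succ) := by
  rw [hx.lord_eq_sum dist hX] at h
  refine lt_of_card_sub_mul_lt_sum (f := fun j => dist (x j.castSucc) (x j.succ))
    (fun j => dist_le_lopt ((hX _).2 ⟨_, rfl⟩) ((hX _).2 ⟨_, rfl⟩)) (by simpa using h) i

theorem snakeWidth_le_of_lt_dist {n : ℕ} {x : Fin (n + 2) → M} {X : Finset M}
    (hX : ∀ y, y ∈ X ↔ ∃ i, x i = y) {ε : ℝ} (hε : ε ≤ 1 / 2)
    (h : ∀ i : Fin (n + 1), (1 - ε) * lopt dist X < dist (x i.castSucc) (x i.succ)) :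
    snakeWidth dist x ≤ ε * lopt dist X := by
  obtain ⟨l, -, hl, hL⟩ := exists_pathLen_eq_lopt dist X
  obtain ⟨u, hu, hdist⟩ := exists_coord_of_pathLen l
  have hmem : ∀ i, x i ∈ l := fun i => (hl _).2 ((hX _).2 ⟨i, rfl⟩)
  rw [hL] at hu
  refine snakeWidth_le dist x fun i j hij => (hdist _ (hmem i) _ (hmem j)).trans ?_
  exact abs_sub_le_of_val_mod_two_eq (u := u ∘ x) hε (fun i => hu _ (hmem i))
    (fun i => (h i).trans_le (hdist _ (hmem _) _ (hmem _))) hij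

end SnakeMetric

section OrderRatio

variable {M : Type*} [MetricSpace M]

theorem exists_snake_of_ORd_eq {T : LinearOrder M} {s : ℕ} (hs : 1 ≤ s)
    (hOR : ORd dist T s = s) {E : ℝ} (hE : 0 < E) :
    ∃ x : Fin (s + 1) → M, IsSnake T x ∧ E * snakeWidth dist x < snakeDiam dist x := by
  obtain ⟨n, rfl⟩ : ∃ n, s = n + 1 := ⟨s - 1, by omega⟩
  obtain ⟨ε, hε₀, hε, hεE⟩ : ∃ ε : ℝ, 0 < ε ∧ ε ≤ 1 / 2 ∧ E * ε < 1 - ε :=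
    ⟨1 / (E + 2), by positivity, one_div_le_one_div_of_le two_pos (by linarith), by
      rw [mul_one_div, lt_sub_iff_add_lt, ← add_div, div_lt_one (by positivity)]
      linarith⟩
  have hlt : ((n + 1 : ℕ) : ℝ) - ε < ORd dist T (n + 1) := by linarith
  obtain ⟨_, ⟨X, hX₂, hXs, rfl⟩, hgt⟩ := exists_lt_of_lt_csSup (by
    by_contra hempty
    rw [ORd, Set.not_nonempty_iff_eq_empty.1 hempty, Real.sSup_empty] at hlt
    push_cast at hlt
    linarith) hlt
  have hcard : X.card = n + 1 + 1 := by
    have hratio := hgt.trans_le (lord_div_lopt_le T hX₂)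
    push_cast at hratio
    have : n + 1 < X.card := by exact_mod_cast (by linarith : (n : ℝ) + 1 < X.card)
    omega
  obtain ⟨x, hx, hXx⟩ := exists_isSnake_of_card_eq T X hcard
  have hL := lopt_pos hX₂
  have hedge := hx.lt_dist_of_lord_gt hXx ((lt_div_iff₀ hL).1 hgt)
  refine ⟨x, hx, ?_⟩
  calc E * snakeWidth dist x ≤ E * (ε * lopt dist X) :=
        mul_le_mul_of_nonneg_left (snakeWidth_le_of_lt_dist hXx hε hedge) hE.le
    _ < (1 - ε) * lopt dist X := by rw [← mul_assoc]; exact mul_lt_mul_of_pos_right hεE hL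
    _ < dist (x (0 : Fin (n + 1)).castSucc) (x (0 : Fin (n + 1)).succ) := hedge 0
    _ ≤ snakeDiam dist x := le_snakeDiam dist x _ _

theorem ORd_eq_of_forall_exists_snake {T : LinearOrder M} {s : ℕ} (hs : 1 ≤ s)
    (h : ∀ E : ℝ, 0 < E → ∃ x : Fin (s + 1) → M, IsSnake T x ∧
      E * snakeWidth dist x < snakeDiam dist x) :
    ORd dist T s = s := by
  refine le_antisymm (ORd_le T s) (le_of_forall_pos_lt_add fun ε hε => ?_)
  obtain ⟨x, hx, hxE⟩ := h ((s * (s + 2) + 1) / ε) (by positivity)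
  set X := Finset.univ.image x
  have hXx : ∀ y, y ∈ X ↔ ∃ i, x i = y := by simp [X]
  have hcard : X.card = s + 1 := by
    rw [Finset.card_image_of_injective _ hx.injective, Finset.card_univ, Fintype.card_fin]
  set a := snakeDiam dist x
  set b := snakeWidth dist x
  have hb := snakeWidth_nonneg x
  rw [div_mul_eq_mul_div, div_lt_iff₀ hε] at hxE
  have hlord : s * (a - 2 * b) ≤ lord dist T X := by
    rw [hx.lord_eq_sum dist hXx]
    simpa using Finset.card_nsmul_le_sum Finset.univ _ _
      fun i _ => snakeDiam_sub_two_mul_snakeWidth_le x i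
  have hlopt : lopt dist X ≤ a + s * b := lopt_le_snakeDiam_add hx.injective hXx
  have hal : a ≤ lopt dist X := by
    obtain ⟨p, q, hpq⟩ := exists_snakeDiam_eq dist x
    calc a = dist (x p) (x q) := hpq
      _ ≤ lopt dist X := dist_le_lopt ((hXx _).2 ⟨p, rfl⟩) ((hXx _).2 ⟨q, rfl⟩)
  have hL := lopt_pos (X := X) (by omega)
  have hratio : s - ε < lord dist T X / lopt dist X := by
    rw [lt_div_iff₀ hL]
    nlinarith [mul_le_mul_of_nonneg_left hlopt (Nat.cast_nonneg s),
      mul_le_mul_of_nonneg_left hal hε.le]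
  linarith [lord_div_lopt_le_ORd T (X := X) (by omega) hcard.le]

end OrderRatio

theorem stmt1_general {M : Type*} [MetricSpace M]
    (T : LinearOrder M) (s : ℕ) (hs : 1 ≤ s) :
    ORd (fun x y : M => dist x y) T s = (s : ℝ) ↔
      ∀ E : ℝ, 0 < E → ∃ x : Fin (s + 1) → M, IsSnake T x ∧
        E * snakeWidth (fun x y : M => dist x y) x <
          snakeDiam (fun x y : M => dist x y) x :=
  ⟨fun hOR _ hE => exists_snake_of_ORd_eq hs hOR hE, ORd_eq_of_forall_exists_snake hs⟩

/-- `OR_{M,T}(s) = s` iff `(M,T)` admits snakes on `s+1` points of arbitrarily large elongation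
(diameter `> E ·` width for every `E > 0`; width `0` counts as infinite elongation). -/
theorem stmt1 {M : Type*} [MetricSpace M] (h2 : ∃ x y : M, x ≠ y)
    (T : LinearOrder M) (s : ℕ) (hs : 1 ≤ s) :
    ORd (fun x y : M => dist x y) T s = (s : ℝ) ↔
      ∀ E : ℝ, 0 < E → ∃ x : Fin (s + 1) → M, IsSnake T x ∧
        E * snakeWidth (fun x y : M => dist x y) x <
          snakeDiam (fun x y : M => dist x y) x :=
  stmt1_general T s hs
end

section
/- Let M be a metric space and F: ℤ_+ → ℝ_+ a function. Suppose that for every finite subset M' ⊆ M there exists a total order T' on M' with OR_{M',T'}(k) ≤ F(k) for all k ≥ 1. Then there exists a total order T on M with OR_{M,T}(k) ≤ F(k) for all k ≥ 1. -/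
/-! Choose for every finite `s ⊆ M` an order `T s` witnessing the bound, and an ultrafilter `U` on
`Finset M` finer than `atTop`. Declaring `x ≤ y` when `T s` puts `x` before `y` for `U`-almost
every `s` gives a linear order on `M`, and since every finite `X ⊆ M` lies in `U`-almost every `s`,
some `s ⊇ X` has `T s` inducing the limit order on `X`. The ratio `lord / lopt` of `X` only
depends on the distances and the order within `X`, so it is bounded by `OR_{s, T s}(k) ≤ F k`. -/

open scoped Classical

theorem pathLen_map {α β : Type*} (d : β → β → ℝ) (f : α → β) :
    ∀ l : List α, pathLen d (l.map f) = pathLen (fun a b => d (f a) (f b)) l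
  | [] => rfl
  | [_] => rfl
  | a :: b :: l => congrArg (d (f a) (f b) + ·) (pathLen_map d f (b :: l))

section Subtype

variable {α : Type*} {p : α → Prop}

-- The instances are implicit so that they unify with those inside `lopt` and `lord` (classical,
-- or derived from a `LinearOrder`) instead of being synthesized.
theorem exists_list_toFinset_eq_map_subtype {_ : DecidableEq α} {_ : DecidableEq (Subtype p)}
    (X : Finset (Subtype p)) {Q : List α → Prop} {Q' : List (Subtype p) → Prop}
    (hQ : ∀ l : List (Subtype p), (∀ a ∈ l, a ∈ X) → (Q (l.map Subtype.val) ↔ Q' l)) :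
    (∃ l : List α, l.Nodup ∧ l.toFinset = X.map (Function.Embedding.subtype p) ∧ Q l) ↔
      ∃ l : List (Subtype p), l.Nodup ∧ l.toFinset = X ∧ Q' l := by
  have toFinset_map (l : List (Subtype p)) :
      (l.map Subtype.val).toFinset = l.toFinset.map (Function.Embedding.subtype p) := by
    ext a
    simp
  have mem_of_toFinset_eq {l : List (Subtype p)} (hl : l.toFinset = X) : ∀ a ∈ l, a ∈ X :=
    fun a ha => hl ▸ List.mem_toFinset.mpr ha
  constructor
  · rintro ⟨l, hnd, hl, hQl⟩
    have hp : ∀ x ∈ l, p x := fun x hx => by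
      obtain ⟨a, -, rfl⟩ := Finset.mem_map.mp (hl ▸ List.mem_toFinset.mpr hx)
      exact a.2
    lift l to List (Subtype p) using hp
    rw [toFinset_map] at hl
    have hl := Finset.map_injective _ hl
    exact ⟨l, hnd.of_map _, hl, (hQ l (mem_of_toFinset_eq hl)).mp hQl⟩
  · rintro ⟨l, hnd, hl, hQl⟩
    exact ⟨l.map Subtype.val, hnd.map Subtype.val_injective, by rw [toFinset_map, hl],
      (hQ l (mem_of_toFinset_eq hl)).mpr hQl⟩

theorem lopt_map_subtype (d : α → α → ℝ) (X : Finset (Subtype p)) :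
    lopt d (X.map (Function.Embedding.subtype p)) = lopt (fun a b : Subtype p => d a b) X := by
  unfold lopt
  congr 1
  ext r
  exact exists_list_toFinset_eq_map_subtype X fun l _ => by rw [pathLen_map]

theorem lord_map_subtype (d : α → α → ℝ) (T : LinearOrder α) (T' : LinearOrder (Subtype p))
    (X : Finset (Subtype p)) (hT : ∀ a ∈ X, ∀ b ∈ X, (T.le a b ↔ T'.le a b)) :
    lord d T (X.map (Function.Embedding.subtype p)) = lord (fun a b : Subtype p => d a b) T' X := by
  have hlt : ∀ a ∈ X, ∀ b ∈ X, (T.lt a b ↔ T'.lt a b) := fun a ha b hb => by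
    rw [@lt_iff_le_not_ge _ T.toPreorder, @lt_iff_le_not_ge _ T'.toPreorder,
      hT a ha b hb, hT b hb a ha]
  unfold lord
  congr 1
  ext r
  refine exists_list_toFinset_eq_map_subtype X fun l hl => and_congr ?_ (by rw [pathLen_map])
  exact List.pairwise_map.trans (List.Pairwise.iff_of_mem fun ha hb => hlt _ (hl _ ha) _ (hl _ hb))

end Subtype

theorem ORd_le_s5 {α : Type*} {d : α → α → ℝ} {T : LinearOrder α} {k : ℕ} {c : ℝ} (hc : 0 ≤ c)
    (h : ∀ X : Finset α, 2 ≤ X.card → X.card ≤ k + 1 → lord d T X / lopt d X ≤ c) :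
    ORd d T k ≤ c :=
  Real.sSup_le (fun _ ⟨X, h2, hk, hr⟩ => hr ▸ h X h2 hk) hc

theorem le_ORd {α : Type*} [Finite α] (d : α → α → ℝ) (T : LinearOrder α) {k : ℕ}
    {X : Finset α} (h2 : 2 ≤ X.card) (hk : X.card ≤ k + 1) :
    lord d T X / lopt d X ≤ ORd d T k := by
  refine le_csSup ((Set.finite_range fun X : Finset α => lord d T X / lopt d X).subset ?_).bddAbove
    ⟨X, h2, hk, rfl⟩
  rintro _ ⟨X, -, -, rfl⟩
  exact ⟨X, rfl⟩

open Filter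

theorem eventually_mem_of_le_atTop {M : Type*} {l : Filter (Finset M)} (hl : l ≤ atTop) (x : M) :
    ∀ᶠ s in l, x ∈ s :=
  ((eventually_ge_atTop {x}).filter_mono hl).mono fun _ => Finset.singleton_subset_iff.mp

section LimitOrder

variable {M : Type*} (T : ∀ s : Finset M, LinearOrder s) {U : Ultrafilter (Finset M)}

def limitLE (U : Ultrafilter (Finset M)) (x y : M) : Prop :=
  ∀ᶠ s in U, ∃ hx : x ∈ s, ∃ hy : y ∈ s, (T s).le ⟨x, hx⟩ ⟨y, hy⟩

theorem limitLE_refl (hU : ↑U ≤ (atTop : Filter (Finset M))) (x : M) : limitLE T U x x :=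
  (eventually_mem_of_le_atTop hU x).mono fun _ hx => ⟨hx, hx, le_rfl⟩

theorem limitLE_trans {x y z : M} (hxy : limitLE T U x y) (hyz : limitLE T U y z) :
    limitLE T U x z :=
  (hxy.and hyz).mono fun _ ⟨⟨hx, _, h₁⟩, ⟨_, hz, h₂⟩⟩ => ⟨hx, hz, h₁.trans h₂⟩

theorem limitLE_antisymm {x y : M} (hxy : limitLE T U x y) (hyx : limitLE T U y x) : x = y :=
  let ⟨_, ⟨_, _, h₁⟩, ⟨_, _, h₂⟩⟩ := (hxy.and hyx).exists
  congrArg Subtype.val (le_antisymm h₁ h₂)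

theorem limitLE_total (hU : ↑U ≤ (atTop : Filter (Finset M))) (x y : M) :
    limitLE T U x y ∨ limitLE T U y x := by
  refine Ultrafilter.eventually_or.mp
    (((eventually_mem_of_le_atTop hU x).and (eventually_mem_of_le_atTop hU y)).mono ?_)
  rintro s ⟨hx, hy⟩
  exact (le_total (⟨x, hx⟩ : s) ⟨y, hy⟩).imp (fun h => ⟨hx, hy, h⟩) fun h => ⟨hy, hx, h⟩

theorem eventually_limitLE_iff (x y : M) :
    ∀ᶠ s in U, ∀ (hx : x ∈ s) (hy : y ∈ s), limitLE T U x y ↔ (T s).le ⟨x, hx⟩ ⟨y, hy⟩ := by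
  by_cases hxy : limitLE T U x y
  · exact hxy.mono fun s ⟨_, _, h⟩ _ _ => iff_of_true hxy h
  · exact (Ultrafilter.eventually_not.mpr hxy).mono fun s h hx hy =>
      iff_of_false hxy fun h' => h ⟨hx, hy, h'⟩

end LimitOrder

theorem exists_linearOrder_forall_finset_exists_superset_agree {M : Type*}
    (T : ∀ s : Finset M, LinearOrder s) :
    ∃ L : LinearOrder M, ∀ X : Finset M, ∃ s : Finset M, X ⊆ s ∧
      ∀ a ∈ X.subtype (· ∈ s), ∀ b ∈ X.subtype (· ∈ s), (L.le a b ↔ (T s).le a b) := by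
  let U := Ultrafilter.of (atTop : Filter (Finset M))
  have hU : ↑U ≤ (atTop : Filter (Finset M)) := Ultrafilter.of_le _
  let L : LinearOrder M :=
    { le := limitLE T U
      le_refl := limitLE_refl T hU
      le_trans _ _ _ := limitLE_trans T
      le_antisymm _ _ := limitLE_antisymm T
      le_total := limitLE_total T hU
      toDecidableLE := Classical.decRel _ }
  refine ⟨L, fun X => ?_⟩
  have hagree : ∀ᶠ s in U, ∀ x ∈ X, ∀ y ∈ X, ∀ (hx : x ∈ s) (hy : y ∈ s),
      limitLE T U x y ↔ (T s).le ⟨x, hx⟩ ⟨y, hy⟩ :=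
    (eventually_all_finset X).mpr fun x _ =>
      (eventually_all_finset X).mpr fun y _ => eventually_limitLE_iff T x y
  obtain ⟨s, hXs, hs⟩ := (((eventually_ge_atTop X).filter_mono hU).and hagree).exists
  exact ⟨s, hXs, fun a ha b hb =>
    hs a (Finset.mem_subtype.mp ha) b (Finset.mem_subtype.mp hb) a.2 b.2⟩

/-- Compactness for orders: if every finite subset `M'` of `M` admits an order whose
order ratio function is bounded by `F`, then so does `M` itself. -/
theorem stmt5 {M : Type*} [MetricSpace M] (F : ℕ → ℝ) (hF : ∀ k : ℕ, 0 ≤ F k)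
    (h : ∀ M' : Finset M, ∃ T' : LinearOrder {x // x ∈ M'},
      ∀ k : ℕ, 1 ≤ k →
        ORd (fun a b : {x // x ∈ M'} => dist a b) T' k ≤ F k) :
    ∃ T : LinearOrder M, ∀ k : ℕ, 1 ≤ k →
      ORd (fun x y : M => dist x y) T k ≤ F k := by
  choose T hT using h
  obtain ⟨L, hL⟩ := exists_linearOrder_forall_finset_exists_superset_agree T
  refine ⟨L, fun k hk => ORd_le_s5 (hF k) fun X hX2 hXk => ?_⟩
  obtain ⟨s, hXs, hagree⟩ := hL X
  have hX : (X.subtype (· ∈ s)).map (Function.Embedding.subtype _) = X :=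
    Finset.subtype_map_of_mem hXs
  have hcard : (X.subtype (· ∈ s)).card = X.card :=
    (Finset.card_map _).symm.trans (congrArg Finset.card hX)
  rw [← hX, lord_map_subtype _ L (T s) _ hagree, lopt_map_subtype]
  exact (le_ORd _ (T s) (hcard ▸ hX2) (hcard ▸ hXk)).trans (hT s k hk)
end

section
/- Let M be a set and let 𝒜 be a family of subsets of M such that any two sets A_1, A_2 ∈ 𝒜 are either disjoint or one is contained in the other. Then there exists a total order T on M such that every set of 𝒜 is convex with respect to T. -/
def ConvexWrt {α : Type*} (T : LinearOrder α) (A : Set α) : Prop :=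
  ∀ x1 x2 x3 : α, T.lt x1 x2 → T.lt x2 x3 → x1 ∈ A → x3 ∈ A → x2 ∈ A

/-! Well-order `M`, extend inclusion on `Set (Set M)` to a linear order, and compare points `x`
lexicographically by their traces `m ↦ {B ∈ 𝒜 | m ∈ B ∧ x ∈ B}`, breaking ties by the
well-order. Let `x, z ∈ A ∈ 𝒜` and `y ∉ A`. By laminarity, for `m ∉ A` the traces of `x` and `z`
agree at `m`, while for `m ∈ A` the trace of `y` at `m` is a proper subset of that of `x` and of
that of `z`. This pattern is incompatible with `x < y < z` lexicographically. -/

theorem Pi.Lex.not_lt_of_lt_of_forall_eq_or_lt {ι : Type*} {β : ι → Type*} [LinearOrder ι]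
    [∀ i, LinearOrder (β i)] {f g k : ∀ i, β i} (hfgk : ∀ i, f i = k i ∨ g i < f i)
    (hfg : toLex f < toLex g) : ¬ toLex g < toLex k := by
  rintro ⟨j, hgk_below, hgk⟩
  obtain ⟨i, hfg_below, hfg⟩ := hfg
  have hfk : f i = k i := (hfgk i).resolve_right hfg.not_gt
  rcases lt_trichotomy i j with hij | rfl | hji
  · exact hfg.ne (hfk.trans (hgk_below i hij).symm)
  · exact (hfg.trans hgk).ne hfk
  · rcases hfgk j with hfk' | hgf
    · exact hgk.ne ((hfg_below j hji).symm.trans hfk')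
    · exact hgf.ne (hfg_below j hji).symm

theorem toLinearExtension_strictMono {β : Type*} [PartialOrder β] :
    StrictMono (toLinearExtension (α := β)) :=
  toLinearExtension.monotone.strictMono_of_injective fun _ _ h ↦ h

section Laminar

variable {α : Type*}

def IsLaminar (𝒜 : Set (Set α)) : Prop :=
  ∀ A ∈ 𝒜, ∀ B ∈ 𝒜, A ∩ B = ∅ ∨ A ⊆ B ∨ B ⊆ A

def commonSets (𝒜 : Set (Set α)) (m x : α) : Set (Set α) :=
  {B ∈ 𝒜 | m ∈ B ∧ x ∈ B}

namespace IsLaminar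

variable {𝒜 : Set (Set α)} {A B : Set α}

theorem subset_of_mem_inter_of_mem_diff (h : IsLaminar 𝒜) (hA : A ∈ 𝒜) (hB : B ∈ 𝒜) {p q : α}
    (hp : p ∈ A ∩ B) (hq : q ∈ B \ A) : A ⊆ B := by
  rcases h A hA B hB with hAB | hAB | hBA
  · exact absurd (hAB ▸ hp) (Set.notMem_empty p)
  · exact hAB
  · exact absurd (hBA hq.1) hq.2

theorem commonSets_eq_of_notMem (h : IsLaminar 𝒜) (hA : A ∈ 𝒜) {m x z : α} (hx : x ∈ A)
    (hz : z ∈ A) (hm : m ∉ A) : commonSets 𝒜 m x = commonSets 𝒜 m z := by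
  have hsub : ∀ {x z}, x ∈ A → z ∈ A → commonSets 𝒜 m x ⊆ commonSets 𝒜 m z :=
    fun hx hz B ⟨hB, hmB, hxB⟩ ↦
      ⟨hB, hmB, h.subset_of_mem_inter_of_mem_diff hA hB ⟨hx, hxB⟩ ⟨hmB, hm⟩ hz⟩
  exact (hsub hx hz).antisymm (hsub hz hx)

theorem commonSets_ssubset_of_mem (h : IsLaminar 𝒜) (hA : A ∈ 𝒜) {m x y : α} (hx : x ∈ A)
    (hy : y ∉ A) (hm : m ∈ A) : commonSets 𝒜 m y ⊂ commonSets 𝒜 m x := by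
  have hsub : commonSets 𝒜 m y ⊆ commonSets 𝒜 m x := fun B ⟨hB, hmB, hyB⟩ ↦
    ⟨hB, hmB, h.subset_of_mem_inter_of_mem_diff hA hB ⟨hm, hmB⟩ ⟨hyB, hy⟩ hx⟩
  exact (Set.ssubset_iff_of_subset hsub).mpr ⟨A, ⟨hA, hm, hx⟩, fun hA' ↦ hy hA'.2.2⟩

end IsLaminar

variable (𝒜 : Set (Set α))

noncomputable def traceKey (x : α) : Lex (α → LinearExtension (Set (Set α))) :=
  toLex fun m ↦ toLinearExtension (commonSets 𝒜 m x)

noncomputable def laminarKey (x : α) : Lex (α → LinearExtension (Set (Set α))) ×ₗ α :=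
  toLex (traceKey 𝒜 x, x)

theorem laminarKey_injective : Function.Injective (laminarKey 𝒜) :=
  fun _ _ h ↦ congrArg Prod.snd (toLex.injective h)

variable {𝒜}

theorem IsLaminar.traceKey_ne (h : IsLaminar 𝒜) {A : Set α} (hA : A ∈ 𝒜) {x y : α}
    (hx : x ∈ A) (hy : y ∉ A) : traceKey 𝒜 x ≠ traceKey 𝒜 y := fun he ↦
  (h.commonSets_ssubset_of_mem hA hx hy hx).ne (congrFun (toLex.injective he) x).symm

variable [LinearOrder α]

theorem traceKey_lt_of_laminarKey_lt {x y : α} (hxy : laminarKey 𝒜 x < laminarKey 𝒜 y)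
    (hne : traceKey 𝒜 x ≠ traceKey 𝒜 y) : traceKey 𝒜 x < traceKey 𝒜 y :=
  (Prod.Lex.toLex_lt_toLex.mp hxy).resolve_right fun he ↦ hne he.1

variable [WellFoundedLT α]

variable (𝒜) in
noncomputable abbrev laminarOrder : LinearOrder α :=
  LinearOrder.lift' (laminarKey 𝒜) (laminarKey_injective 𝒜)

theorem IsLaminar.convexWrt_laminarOrder (h : IsLaminar 𝒜) {A : Set α} (hA : A ∈ 𝒜) :
    ConvexWrt (laminarOrder 𝒜) A := by
  intro x y z hxy hyz hx hz
  by_contra hy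
  have htrace (m : α) : toLinearExtension (commonSets 𝒜 m x) =
        toLinearExtension (commonSets 𝒜 m z) ∨
      toLinearExtension (commonSets 𝒜 m y) < toLinearExtension (commonSets 𝒜 m x) := by
    by_cases hm : m ∈ A
    · exact Or.inr (toLinearExtension_strictMono (h.commonSets_ssubset_of_mem hA hx hy hm))
    · exact Or.inl (congrArg _ (h.commonSets_eq_of_notMem hA hx hz hm))
  exact Pi.Lex.not_lt_of_lt_of_forall_eq_or_lt htrace
    (traceKey_lt_of_laminarKey_lt hxy (h.traceKey_ne hA hx hy))
    (traceKey_lt_of_laminarKey_lt hyz (h.traceKey_ne hA hz hy).symm)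

end Laminar

/-- If any two sets of a family `𝒜` are either disjoint or nested, then there is a total
order on `M` making every set of `𝒜` convex. -/
theorem stmt6 {M : Type*} (𝒜 : Set (Set M))
    (h : ∀ A1 ∈ 𝒜, ∀ A2 ∈ 𝒜, A1 ∩ A2 = ∅ ∨ A1 ⊆ A2 ∨ A2 ⊆ A1) :
    ∃ T : LinearOrder M, ∀ A ∈ 𝒜, ConvexWrt T A := by
  obtain ⟨_, _⟩ := exists_wellFoundedLT M
  exact ⟨laminarOrder 𝒜, fun A hA ↦ IsLaminar.convexWrt_laminarOrder h hA⟩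
end

section
/- Let Γ be a domino graph (two junction vertices A, B joined by three disjoint paths) with its inner metric, in which each of the three paths between A and B has length at least 1. Then for any total order T on Γ and any ε > 0 there exists a snake on 4 points in (Γ,T) of diameter at least 1/3 − ε and of width at most 2ε. In particular, Γ admits snakes on 4 points of arbitrarily large elongation for every order T. -/
open scoped Classical

/-!
Suppose there is no snake `x₁ < x₂ < x₃ < x₄` with `d(x₁,x₃), d(x₂,x₄) < w` and
`ρ ≤ d(x₁,x₂)`, where `w ≤ ρ ≤ 1/3`. Then a path staying `ρ`-far from `u` that starts inside the
order interval `(u, u')` of a close pair `u < u'` never leaves it: at the exit, a point just inside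
and a point just outside form a snake with `u` and `u'`.

For every point `h` there are three points, each two of them joined by a path staying `ρ`-far from
the third and from `h`; the path between the two outer ones (in the order) passes the middle one
`v`, which yields close points `g < v < g'` that are `ρ`-far from `v` and from `h`. Moreover, for
`ρ ≤ 1/2` the complement of an open `ρ`-ball is path-connected.

Take such `h < v < h'`, and then `g < v' < g'` far from `h`. A path from `v` to `g` avoiding the
ball around `h` gives `h < g`; a path from `v'` to `h` avoiding the ball around `g` gives `g < h`.
-/

open Set Metric

section Snakes

variable {M : Type*} [PseudoMetricSpace M]

theorem IsPreconnected.exists_dist_lt_of_inter_nonempty_of_diff_nonempty {K A : Set M}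
    (hK : IsPreconnected K) (hA : (K ∩ A).Nonempty) (hA' : (K \ A).Nonempty) {δ : ℝ}
    (hδ : 0 < δ) : ∃ z ∈ K ∩ A, ∃ z' ∈ K \ A, dist z z' < δ := by
  have hδ2 : 0 < δ / 2 := half_pos hδ
  obtain ⟨y, -, hy, hy'⟩ := hK _ _ isOpen_thickening isOpen_thickening
    (fun y hy => by
      by_cases hyA : y ∈ A
      · exact Or.inl (self_subset_thickening hδ2 _ ⟨hy, hyA⟩)
      · exact Or.inr (self_subset_thickening hδ2 _ ⟨hy, hyA⟩))
    (hA.mono fun x hx => ⟨hx.1, self_subset_thickening hδ2 _ hx⟩)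
    (hA'.mono fun x hx => ⟨hx.1, self_subset_thickening hδ2 _ hx⟩)
  obtain ⟨z, hz, hyz⟩ := mem_thickening_iff.1 hy
  obtain ⟨z', hz', hyz'⟩ := mem_thickening_iff.1 hy'
  refine ⟨z, hz, z', hz', ?_⟩
  linarith [dist_triangle_left z z' y]

theorem JoinedIn.exists_dist_lt_of_mem_of_notMem {F A : Set M} {x y : M} (h : JoinedIn F x y)
    (hx : x ∈ A) (hy : y ∉ A) {δ : ℝ} (hδ : 0 < δ) :
    ∃ z ∈ F ∩ A, ∃ z' ∈ F \ A, dist z z' < δ := by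
  have hF : range h.somePath ⊆ F := range_subset_iff.2 h.somePath_mem
  have hK := (isConnected_range h.somePath.continuous).isPreconnected
  obtain ⟨z, hz, z', hz', hzz'⟩ := hK.exists_dist_lt_of_inter_nonempty_of_diff_nonempty
    ⟨x, ⟨0, h.somePath.source⟩, hx⟩ ⟨y, ⟨1, h.somePath.target⟩, hy⟩ hδ
  exact ⟨z, ⟨hF hz.1, hz.2⟩, z', ⟨hF hz'.1, hz'.2⟩, hzz'⟩

variable [LinearOrder M]

theorem JoinedIn.exists_straddle {F : Set M} {p q c : M} (h : JoinedIn F p q) (hc : c ∉ F)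
    (hpc : p ≤ c) (hcq : c ≤ q) {δ : ℝ} (hδ : 0 < δ) :
    ∃ g ∈ F, ∃ g' ∈ F, g < c ∧ c < g' ∧ dist g g' < δ := by
  have hp : p ∈ Iio c := hpc.lt_of_ne fun e => hc (e ▸ h.source_mem)
  obtain ⟨g, ⟨hg, hgc⟩, g', ⟨hg', hcg'⟩, hgg'⟩ :=
    h.exists_dist_lt_of_mem_of_notMem hp (not_lt.2 hcq) hδ
  exact ⟨g, hg, g', hg', hgc, (not_lt.1 hcg').lt_of_ne fun e => hc (e ▸ hg'), hgg'⟩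

def IsTriad (S : M → Set M) (p q r : M) : Prop :=
  JoinedIn (S r) p q ∧ JoinedIn (S p) q r ∧ JoinedIn (S q) p r

theorem IsTriad.exists_straddle {S : M → Set M} (hS : ∀ c, c ∉ S c) {p q r : M}
    (h : IsTriad S p q r) {δ : ℝ} (hδ : 0 < δ) :
    ∃ c, ∃ g ∈ S c, ∃ g' ∈ S c, g < c ∧ c < g' ∧ dist g g' < δ := by
  obtain ⟨hpq, hqr, hpr⟩ := h
  rcases le_total p q with h₁ | h₁ <;> rcases le_total q r with h₂ | h₂ <;>
    rcases le_total p r with h₃ | h₃ <;>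
    first
    | exact ⟨q, hpr.exists_straddle (hS q) ‹_› ‹_› hδ⟩
    | exact ⟨q, hpr.symm.exists_straddle (hS q) ‹_› ‹_› hδ⟩
    | exact ⟨r, hpq.exists_straddle (hS r) ‹_› ‹_› hδ⟩
    | exact ⟨r, hpq.symm.exists_straddle (hS r) ‹_› ‹_› hδ⟩
    | exact ⟨p, hqr.exists_straddle (hS p) ‹_› ‹_› hδ⟩
    | exact ⟨p, hqr.symm.exists_straddle (hS p) ‹_› ‹_› hδ⟩

variable (M) in
def HasSnake4 (ρ w : ℝ) : Prop :=
  ∃ x₁ x₂ x₃ x₄ : M, x₁ < x₂ ∧ x₂ < x₃ ∧ x₃ < x₄ ∧ dist x₁ x₃ < w ∧ dist x₂ x₄ < w ∧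
    ρ ≤ dist x₁ x₂

theorem mem_Ioo_of_joinedIn_of_not_hasSnake4 {ρ w : ℝ} (hns : ¬ HasSnake4 M ρ w) {u u' x y : M}
    (huu' : dist u u' < w) (hwρ : w ≤ ρ) (hxy : JoinedIn {z | ρ ≤ dist z u} x y)
    (hx : x ∈ Ioo u u') : y ∈ Ioo u u' := by
  by_contra hy
  have hw : 0 < w := dist_nonneg.trans_lt huu'
  obtain ⟨z, ⟨hzu, hz⟩, z', ⟨hz'u, hz'⟩, hzz'⟩ := hxy.exists_dist_lt_of_mem_of_notMem hx hy hw
  change ρ ≤ dist z' u at hz'u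
  rcases not_and_or.1 hz' with h | h
  · have hz'_lt : z' < u := (not_lt.1 h).lt_of_ne fun e => by
      rw [e, dist_self] at hz'u; linarith
    exact hns ⟨z', u, z, u', hz'_lt, hz.1, hz.2, dist_comm z z' ▸ hzz', huu', hz'u⟩
  · have hu'_lt : u' < z' := (not_lt.1 h).lt_of_ne fun e => by
      rw [← e, dist_comm] at hz'u; linarith
    exact hns ⟨u, z, u', z', hz.1, hz.2, hu'_lt, huu', hzz', dist_comm z u ▸ hzu⟩

theorem HasSnake4.exists_isSnake {ρ w : ℝ} (hs : HasSnake4 M ρ w) :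
    ∃ x : Fin 4 → M, IsSnake ‹LinearOrder M› x ∧
      ρ ≤ snakeDiam (fun x y : M => dist x y) x ∧ snakeWidth (fun x y : M => dist x y) x ≤ w := by
  obtain ⟨x₁, x₂, x₃, x₄, h₁₂, h₂₃, h₃₄, h₁₃, h₂₄, hρ⟩ := hs
  have hw : 0 < w := dist_nonneg.trans_lt h₁₃
  refine ⟨![x₁, x₂, x₃, x₄], ?_, ?_, ?_⟩
  · exact fun i j hij => (Fin.strictMono_iff_lt_succ.2 fun k => by
      fin_cases k; exacts [h₁₂, h₂₃, h₃₄]) hij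
  · refine hρ.trans (le_csSup ?_ ⟨0, 1, rfl⟩)
    refine (Set.finite_range fun ij : Fin 4 × Fin 4 => dist (![x₁, x₂, x₃, x₄] ij.1)
      (![x₁, x₂, x₃, x₄] ij.2)).bddAbove.mono ?_
    rintro _ ⟨i, j, rfl⟩
    exact ⟨(i, j), rfl⟩
  · refine csSup_le ⟨_, 0, 0, rfl, rfl⟩ ?_
    rintro _ ⟨i, j, hij, rfl⟩
    fin_cases i <;> fin_cases j <;> simp_all [dist_comm, le_of_lt]

end Snakes

/-- The distance bounds of a θ-graph with arcs `γ i : [0, L i] → M` from `a` to `b`, all of length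
at least `1`: arcs are `1`-Lipschitz, and two points are at least as far apart as the shorter of
their distances along the graph and `1`. -/
structure ThetaGraph (M : Type*) [PseudoMetricSpace M] where
  a : M
  b : M
  L : Fin 3 → ℝ
  γ : Fin 3 → ℝ → M
  one_le_L : ∀ i, 1 ≤ L i
  γ_zero : ∀ i, γ i 0 = a
  γ_L : ∀ i, γ i (L i) = b
  dist_le : ∀ i, ∀ s ∈ Icc 0 (L i), ∀ t ∈ Icc 0 (L i), dist (γ i s) (γ i t) ≤ |s - t|
  min_le_dist : ∀ i, ∀ s ∈ Icc 0 (L i), ∀ t ∈ Icc 0 (L i), min |s - t| 1 ≤ dist (γ i s) (γ i t)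
  min_le_dist_of_ne : ∀ i j, i ≠ j → ∀ s ∈ Icc 0 (L i), ∀ t ∈ Icc 0 (L j),
    min (min (s + t) (L i - s + (L j - t))) 1 ≤ dist (γ i s) (γ j t)
  surj : ∀ x, ∃ i, ∃ s ∈ Icc 0 (L i), x = γ i s

namespace ThetaGraph

variable {M : Type*} [PseudoMetricSpace M] (Γ : ThetaGraph M)

theorem L_nonneg (i : Fin 3) : 0 ≤ Γ.L i := zero_le_one.trans (Γ.one_le_L i)

def reverse : ThetaGraph M where
  a := Γ.b
  b := Γ.a
  L := Γ.L
  γ i s := Γ.γ i (Γ.L i - s)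
  one_le_L := Γ.one_le_L
  γ_zero i := by simp only [sub_zero, Γ.γ_L]
  γ_L i := by simp only [sub_self, Γ.γ_zero]
  dist_le i s hs t ht := by
    simpa only [sub_sub_sub_cancel_left, abs_sub_comm] using
      Γ.dist_le i _ (sub_mem_Icc_zero_iff_right.2 hs) _ (sub_mem_Icc_zero_iff_right.2 ht)
  min_le_dist i s hs t ht := by
    simpa only [sub_sub_sub_cancel_left, abs_sub_comm] using
      Γ.min_le_dist i _ (sub_mem_Icc_zero_iff_right.2 hs) _ (sub_mem_Icc_zero_iff_right.2 ht)
  min_le_dist_of_ne i j hij s hs t ht := by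
    simpa only [sub_sub_cancel, min_comm (Γ.L i - s + (Γ.L j - t))] using
      Γ.min_le_dist_of_ne i j hij _ (sub_mem_Icc_zero_iff_right.2 hs) _
        (sub_mem_Icc_zero_iff_right.2 ht)
  surj x := by
    obtain ⟨i, s, hs, rfl⟩ := Γ.surj x
    exact ⟨i, Γ.L i - s, sub_mem_Icc_zero_iff_right.2 hs, by rw [sub_sub_cancel]⟩

variable {i j : Fin 3} {s t r : ℝ}

theorem le_dist (hs : s ∈ Icc 0 (Γ.L i)) (ht : t ∈ Icc 0 (Γ.L i)) (h : r ≤ |s - t|)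
    (h₁ : r ≤ 1) : r ≤ dist (Γ.γ i s) (Γ.γ i t) :=
  (le_min h h₁).trans (Γ.min_le_dist i s hs t ht)

theorem le_dist_of_ne (hij : i ≠ j) (hs : s ∈ Icc 0 (Γ.L i)) (ht : t ∈ Icc 0 (Γ.L j))
    (ha : r ≤ s + t) (hb : r ≤ Γ.L i - s + (Γ.L j - t)) (h₁ : r ≤ 1) :
    r ≤ dist (Γ.γ i s) (Γ.γ j t) :=
  (le_min (le_min ha hb) h₁).trans (Γ.min_le_dist_of_ne i j hij s hs t ht)

theorem dist_a_le (hs : s ∈ Icc 0 (Γ.L i)) : dist (Γ.γ i s) Γ.a ≤ s := by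
  simpa [Γ.γ_zero, abs_of_nonneg hs.1] using
    Γ.dist_le i s hs 0 ⟨le_rfl, Γ.L_nonneg i⟩

theorem dist_b_le (hs : s ∈ Icc 0 (Γ.L i)) : dist (Γ.γ i s) Γ.b ≤ Γ.L i - s := by
  simpa [Γ.γ_L, abs_of_nonpos (sub_nonpos.2 hs.2)] using
    Γ.dist_le i s hs (Γ.L i) ⟨Γ.L_nonneg i, le_rfl⟩

theorem le_dist_a (hs : s ∈ Icc 0 (Γ.L i)) (h : r ≤ s) (h₁ : r ≤ 1) :
    r ≤ dist (Γ.γ i s) Γ.a := by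
  simpa only [Γ.γ_zero] using
    Γ.le_dist hs ⟨le_rfl, Γ.L_nonneg i⟩ (by rwa [sub_zero, abs_of_nonneg hs.1]) h₁

theorem le_dist_b (hs : s ∈ Icc 0 (Γ.L i)) (h : r ≤ Γ.L i - s) (h₁ : r ≤ 1) :
    r ≤ dist (Γ.γ i s) Γ.b := by
  simpa only [Γ.γ_L] using Γ.le_dist hs ⟨Γ.L_nonneg i, le_rfl⟩
    (by rwa [abs_sub_comm, abs_of_nonneg (sub_nonneg.2 hs.2)]) h₁

theorem one_le_dist_a_b : 1 ≤ dist Γ.a Γ.b := by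
  rw [dist_comm, ← Γ.γ_L 0]
  exact Γ.le_dist_a ⟨Γ.L_nonneg 0, le_rfl⟩ (Γ.one_le_L 0) le_rfl

theorem continuousOn_γ (i : Fin 3) : ContinuousOn (Γ.γ i) (Icc 0 (Γ.L i)) :=
  (LipschitzOnWith.of_dist_le_mul (K := 1) fun s hs t ht => by
    simpa [Real.dist_eq] using Γ.dist_le i s hs t ht).continuousOn

theorem joinedIn_γ {F : Set M} {A B : ℝ} (hA : 0 ≤ A) (hAB : A ≤ B) (hB : B ≤ Γ.L i)
    (hF : ∀ u ∈ Icc A B, Γ.γ i u ∈ F) : JoinedIn F (Γ.γ i A) (Γ.γ i B) :=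
  ((((convex_Icc A B).isPathConnected (nonempty_Icc.2 hAB)).image'
    ((Γ.continuousOn_γ i).mono (Icc_subset_Icc hA hB))).joinedIn _
      (mem_image_of_mem _ ⟨le_rfl, hAB⟩) _ (mem_image_of_mem _ ⟨hAB, le_rfl⟩)).mono
    (image_subset_iff.2 hF)

theorem le_dist_of_ne_of_le_dist_a_b (hij : i ≠ j) (hs : s ∈ Icc 0 (Γ.L i))
    (ht : t ∈ Icc 0 (Γ.L j)) (ha : r ≤ dist (Γ.γ j t) Γ.a) (hb : r ≤ dist (Γ.γ j t) Γ.b)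
    (hr : r ≤ 1) : r ≤ dist (Γ.γ i s) (Γ.γ j t) := by
  have := Γ.dist_a_le ht
  have := Γ.dist_b_le ht
  exact Γ.le_dist_of_ne hij hs ht (by linarith [hs.1]) (by linarith [hs.2]) hr

theorem joinedIn_a_b {z : M} (hr : r ≤ 1) (ha : r ≤ dist Γ.a z) (hb : r ≤ dist Γ.b z) :
    JoinedIn {y | r ≤ dist y z} Γ.a Γ.b := by
  obtain ⟨j, t, ht, rfl⟩ := Γ.surj z
  obtain ⟨i, hij⟩ := (by decide : ∀ j : Fin 3, ∃ i, i ≠ j) j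
  rw [dist_comm] at ha hb
  have h := Γ.joinedIn_γ (F := {y | r ≤ dist y (Γ.γ j t)}) le_rfl (Γ.L_nonneg i) le_rfl
    fun u hu => Γ.le_dist_of_ne_of_le_dist_a_b hij hu ht ha hb hr
  rwa [Γ.γ_zero, Γ.γ_L] at h

theorem joinedIn_a_or_b {x z : M} (hr : r ≤ 1 / 2) (hx : r ≤ dist x z) :
    JoinedIn {y | r ≤ dist y z} x Γ.a ∨ JoinedIn {y | r ≤ dist y z} x Γ.b := by
  obtain ⟨i, s, hs, rfl⟩ := Γ.surj x
  obtain ⟨j, t, ht, rfl⟩ := Γ.surj z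
  have hsa : ∀ u ∈ Icc 0 s, u ∈ Icc 0 (Γ.L i) := fun u hu => ⟨hu.1, hu.2.trans hs.2⟩
  have hsb : ∀ u ∈ Icc s (Γ.L i), u ∈ Icc 0 (Γ.L i) := fun u hu => ⟨hs.1.trans hu.1, hu.2⟩
  have toA (hF : ∀ u ∈ Icc 0 s, r ≤ dist (Γ.γ i u) (Γ.γ j t)) :
      JoinedIn {y | r ≤ dist y (Γ.γ j t)} (Γ.γ i s) Γ.a := by
    simpa only [Γ.γ_zero] using (Γ.joinedIn_γ le_rfl hs.1 hs.2 hF).symm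
  have toB (hF : ∀ u ∈ Icc s (Γ.L i), r ≤ dist (Γ.γ i u) (Γ.γ j t)) :
      JoinedIn {y | r ≤ dist y (Γ.γ j t)} (Γ.γ i s) Γ.b := by
    simpa only [Γ.γ_L] using Γ.joinedIn_γ hs.1 hs.2 le_rfl hF
  by_cases hij : i = j
  · subst hij
    have hst := hx.trans (Γ.dist_le i s hs t ht)
    rcases le_total s t with h | h
    · refine Or.inl (toA fun u hu => Γ.le_dist (hsa u hu) ht ?_ (by linarith))
      rw [abs_of_nonpos (by linarith)] at hst
      rw [abs_of_nonpos (by linarith [hu.2])]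
      linarith [hu.2]
    · refine Or.inr (toB fun u hu => Γ.le_dist (hsb u hu) ht ?_ (by linarith))
      rw [abs_of_nonneg (by linarith)] at hst
      rw [abs_of_nonneg (by linarith [hu.1])]
      linarith [hu.1]
  · have hxa := (dist_triangle (Γ.γ i s) Γ.a (Γ.γ j t)).trans
      (add_le_add (Γ.dist_a_le hs) ((dist_comm _ _).trans_le (Γ.dist_a_le ht)))
    have hxb := (dist_triangle (Γ.γ i s) Γ.b (Γ.γ j t)).trans
      (add_le_add (Γ.dist_b_le hs) ((dist_comm _ _).trans_le (Γ.dist_b_le ht)))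
    rcases le_total r t with h | h
    · exact Or.inl (toA fun u hu => Γ.le_dist_of_ne hij (hsa u hu) ht (by linarith [hu.1])
        (by linarith [hu.2]) (by linarith))
    · exact Or.inr (toB fun u hu => Γ.le_dist_of_ne hij (hsb u hu) ht (by linarith [hu.1])
        (by linarith [hu.2, Γ.one_le_L j]) (by linarith))

theorem joinedIn_of_le_dist (Γ : ThetaGraph M) {x y z : M} (hr : r ≤ 1 / 2) (hx : r ≤ dist x z)
    (hy : r ≤ dist y z) : JoinedIn {w | r ≤ dist w z} x y := by
  rcases Γ.joinedIn_a_or_b hr hx with hxa | hxb <;>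
    rcases Γ.joinedIn_a_or_b hr hy with hya | hyb
  · exact hxa.trans hya.symm
  · exact hxa.trans ((Γ.joinedIn_a_b (by linarith) hxa.target_mem hyb.target_mem).trans hyb.symm)
  · exact hxb.trans ((Γ.joinedIn_a_b (by linarith) hya.target_mem hxb.target_mem).symm.trans
      hya.symm)
  · exact hxb.trans hyb.symm

theorem joinedIn_star {h : M} {ρ : ℝ} (hρ : 0 ≤ ρ) (hρ3 : ρ ≤ 1 / 3) (hb : 2 * ρ ≤ dist h Γ.b)
    {k : Fin 3} (hik : i ≠ k) :
    JoinedIn {z | ρ ≤ dist z (Γ.γ k (Γ.L k - ρ)) ∧ ρ ≤ dist z h} (Γ.γ i (Γ.L i - ρ)) Γ.b := by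
  have hLi := Γ.one_le_L i
  have hLk := Γ.one_le_L k
  rw [← Γ.γ_L i]
  refine Γ.joinedIn_γ (by linarith) (by linarith) le_rfl fun u hu => ⟨?_, ?_⟩
  · exact Γ.le_dist_of_ne hik ⟨by linarith [hu.1], hu.2⟩ ⟨by linarith, by linarith⟩
      (by linarith [hu.1]) (by linarith [hu.2]) (by linarith)
  · have := Γ.dist_b_le (i := i) ⟨by linarith [hu.1], hu.2⟩
    linarith [dist_triangle h (Γ.γ i u) Γ.b, dist_comm h (Γ.γ i u), hu.1]

theorem isTriad_star {h : M} {ρ : ℝ} (hρ : 0 ≤ ρ) (hρ3 : ρ ≤ 1 / 3) (hb : 2 * ρ ≤ dist h Γ.b) :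
    IsTriad (fun c => {z | ρ ≤ dist z c ∧ ρ ≤ dist z h})
      (Γ.γ 0 (Γ.L 0 - ρ)) (Γ.γ 1 (Γ.L 1 - ρ)) (Γ.γ 2 (Γ.L 2 - ρ)) := by
  have star {i k : Fin 3} (hik : i ≠ k) := Γ.joinedIn_star hρ hρ3 hb hik
  exact ⟨(star (by decide : (0 : Fin 3) ≠ 2)).trans (star (by decide : (1 : Fin 3) ≠ 2)).symm,
    (star (by decide : (1 : Fin 3) ≠ 0)).trans (star (by decide : (2 : Fin 3) ≠ 0)).symm,
    (star (by decide : (0 : Fin 3) ≠ 1)).trans (star (by decide : (2 : Fin 3) ≠ 1)).symm⟩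

theorem isTriad_mid {h : M} {ρ : ℝ} (hρ3 : ρ ≤ 1 / 3) (ha : ρ ≤ dist h Γ.a)
    (hb : ρ ≤ dist h Γ.b) :
    ∃ p q r, IsTriad (fun c => {z | ρ ≤ dist z c ∧ ρ ≤ dist z h}) p q r := by
  obtain ⟨w, t, ht, rfl⟩ := Γ.surj h
  obtain ⟨j, k, hjw, hkw, hkj⟩ :=
    (by decide : ∀ w : Fin 3, ∃ j k : Fin 3, j ≠ w ∧ k ≠ w ∧ k ≠ j) w
  have far {l : Fin 3} (hl : l ≠ w) {u : ℝ} (hu : u ∈ Icc 0 (Γ.L l)) :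
      ρ ≤ dist (Γ.γ l u) (Γ.γ w t) :=
    Γ.le_dist_of_ne_of_le_dist_a_b hl hu ht ha hb (by linarith)
  have hLj := Γ.one_le_L j
  have hLk := Γ.one_le_L k
  refine ⟨Γ.a, Γ.γ j (Γ.L j / 2), Γ.b, ?_, ?_, ?_⟩
  · rw [← Γ.γ_zero j]
    exact Γ.joinedIn_γ le_rfl (by linarith) (by linarith)
      fun u hu => ⟨Γ.le_dist_b ⟨hu.1, by linarith [hu.2]⟩ (by linarith [hu.2]) (by linarith),
        far hjw ⟨hu.1, by linarith [hu.2]⟩⟩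
  · rw [← Γ.γ_L j]
    exact Γ.joinedIn_γ (by linarith) (by linarith) le_rfl
      fun u hu => ⟨Γ.le_dist_a ⟨by linarith [hu.1], hu.2⟩ (by linarith [hu.1]) (by linarith),
        far hjw ⟨by linarith [hu.1], hu.2⟩⟩
  · rw [← Γ.γ_zero k, ← Γ.γ_L k]
    exact Γ.joinedIn_γ le_rfl (Γ.L_nonneg k) le_rfl
      fun u hu => ⟨Γ.le_dist_of_ne hkj hu ⟨by linarith, by linarith⟩ (by linarith [hu.1])
        (by linarith [hu.2]) (by linarith), far hkw hu⟩

theorem exists_isTriad (Γ : ThetaGraph M) {ρ : ℝ} (hρ : 0 ≤ ρ) (hρ3 : ρ ≤ 1 / 3) (h : M) :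
    ∃ p q r, IsTriad (fun c => {z | ρ ≤ dist z c ∧ ρ ≤ dist z h}) p q r := by
  by_cases hb : 2 * ρ ≤ dist h Γ.b
  · exact ⟨_, _, _, Γ.isTriad_star hρ hρ3 hb⟩
  by_cases ha : 2 * ρ ≤ dist h Γ.a
  · exact ⟨_, _, _, Γ.reverse.isTriad_star hρ hρ3 ha⟩
  -- `d(a, b) ≥ 1 ≥ 3ρ`, so a point `2ρ`-close to both `a` and `b` is `ρ`-far from both.
  have := Γ.one_le_dist_a_b
  have := dist_triangle Γ.a h Γ.b
  exact Γ.isTriad_mid hρ3 (by linarith [dist_comm h Γ.a]) (by linarith [dist_comm h Γ.a])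

variable [LinearOrder M]

theorem exists_straddle (Γ : ThetaGraph M) {ρ δ : ℝ} (hρ : 0 < ρ) (hρ3 : ρ ≤ 1 / 3) (h : M)
    (hδ : 0 < δ) :
    ∃ v g g', g < v ∧ v < g' ∧ dist g g' < δ ∧ ρ ≤ dist g v ∧ ρ ≤ dist g' v ∧
      ρ ≤ dist g h ∧ ρ ≤ dist g' h := by
  obtain ⟨p, q, r, hpqr⟩ := Γ.exists_isTriad hρ.le hρ3 h
  obtain ⟨v, g, hg, g', hg', hgv, hvg', hgg'⟩ :=
    hpqr.exists_straddle (fun c hc => hρ.not_ge (hc.1.trans_eq (dist_self c))) hδ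
  exact ⟨v, g, g', hgv, hvg', hgg', hg.1, hg'.1, hg.2, hg'.2⟩

theorem hasSnake4 (Γ : ThetaGraph M) {ρ w : ℝ} (hw : 0 < w) (hwρ : w ≤ ρ) (hρ3 : ρ ≤ 1 / 3) :
    HasSnake4 M ρ w := by
  by_contra hns
  have hρ : 0 < ρ := hw.trans_le hwρ
  have hρ2 : ρ ≤ 1 / 2 := by linarith
  obtain ⟨v, h, h', hhv, hvh', hhh', hhv', -, -, -⟩ := Γ.exists_straddle hρ hρ3 Γ.a hw
  obtain ⟨v', g, g', hgv', hv'g', hgg', hgv'_far, -, hgh, -⟩ := Γ.exists_straddle hρ hρ3 h hw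
  have hg : g ∈ Ioo h h' := mem_Ioo_of_joinedIn_of_not_hasSnake4 hns hhh' hwρ
    (Γ.joinedIn_of_le_dist hρ2 (dist_comm h v ▸ hhv') hgh) ⟨hhv, hvh'⟩
  have hh : h ∈ Ioo g g' := mem_Ioo_of_joinedIn_of_not_hasSnake4 hns hgg' hwρ
    (Γ.joinedIn_of_le_dist hρ2 (dist_comm g v' ▸ hgv'_far) (dist_comm g h ▸ hgh)) ⟨hgv', hv'g'⟩
  exact lt_asymm hg.1 hh.1

end ThetaGraph

/-- Let `Γ` be a domino (theta) graph: two junction points `a, b` joined by three internally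
disjoint arcs of lengths `L 0, L 1, L 2 ≥ 1`, with the inner metric (axiomatised via the
arc-length parametrisations `γ` and the explicit distance formulas).  Then for every total
order `T` on `Γ` and every `ε > 0` there is a snake on `4` points of diameter at least
`1/3 - ε` and width at most `2ε`; in particular `Γ` admits snakes on `4` points of
arbitrarily large elongation for every order. -/
theorem stmt12 {M : Type*} [MetricSpace M] (a b : M) (L : Fin 3 → ℝ)
    (hL : ∀ i, 1 ≤ L i)
    (γ : Fin 3 → ℝ → M)
    (h0 : ∀ i, γ i 0 = a) (h1 : ∀ i, γ i (L i) = b)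
    (hsame : ∀ i : Fin 3, ∀ s t : ℝ, s ∈ Set.Icc 0 (L i) → t ∈ Set.Icc 0 (L i) →
      dist (γ i s) (γ i t) =
        min (|s - t|)
          (min (s + min (min (L 0) (L 1)) (L 2) + (L i - t))
            ((L i - s) + min (min (L 0) (L 1)) (L 2) + t)))
    (hdiff : ∀ i j : Fin 3, i ≠ j → ∀ s t : ℝ,
      s ∈ Set.Icc 0 (L i) → t ∈ Set.Icc 0 (L j) →
      dist (γ i s) (γ j t) =
        min (min (s + t) ((L i - s) + (L j - t)))
          (min (s + min (min (L 0) (L 1)) (L 2) + (L j - t))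
            ((L i - s) + min (min (L 0) (L 1)) (L 2) + t)))
    (hsurj : ∀ x : M, ∃ i : Fin 3, ∃ s ∈ Set.Icc 0 (L i), x = γ i s) :
    (∀ (T : LinearOrder M) (ε : ℝ), 0 < ε →
      ∃ x : Fin 4 → M, IsSnake T x ∧
        1/3 - ε ≤ snakeDiam (fun x y : M => dist x y) x ∧
        snakeWidth (fun x y : M => dist x y) x ≤ 2 * ε) ∧
    (∀ (T : LinearOrder M) (E : ℝ), 0 < E →
      ∃ x : Fin 4 → M, IsSnake T x ∧
        E * snakeWidth (fun x y : M => dist x y) x <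
          snakeDiam (fun x y : M => dist x y) x) := by
  have hm : 1 ≤ min (min (L 0) (L 1)) (L 2) := le_min (le_min (hL 0) (hL 1)) (hL 2)
  let Γ : ThetaGraph M :=
    { a, b, L, γ
      one_le_L := hL
      γ_zero := h0
      γ_L := h1
      dist_le := fun i s hs t ht => (hsame i s t hs ht).trans_le (min_le_left _ _)
      min_le_dist := fun i s hs t ht => (hsame i s t hs ht).symm ▸ min_le_min_left _
        (le_min (by linarith [hs.1, ht.2]) (by linarith [hs.2, ht.1]))
      min_le_dist_of_ne := fun i j hij s hs t ht => (hdiff i j hij s t hs ht).symm ▸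
        min_le_min_left _ (le_min (by linarith [hs.1, ht.2]) (by linarith [hs.2, ht.1]))
      surj := hsurj }
  have snake (T : LinearOrder M) {w : ℝ} (hw : 0 < w) (hw3 : w ≤ 1 / 3) :
      ∃ x : Fin 4 → M, IsSnake T x ∧ 1 / 3 ≤ snakeDiam (fun x y : M => dist x y) x ∧
        snakeWidth (fun x y : M => dist x y) x ≤ w :=
    letI := T
    (Γ.hasSnake4 hw hw3 le_rfl).exists_isSnake
  refine ⟨fun T ε hε => ?_, fun T E hE => ?_⟩
  · obtain ⟨x, hx, hdiam, hwidth⟩ := snake T (w := min (2 * ε) (1 / 3)) (by positivity)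
      (min_le_right _ _)
    exact ⟨x, hx, by linarith, hwidth.trans (min_le_left _ _)⟩
  · obtain ⟨x, hx, hdiam, hwidth⟩ := snake T (w := 1 / (3 * (E + 1))) (by positivity)
      (by rw [div_le_div_iff₀ (by positivity) (by norm_num)]; linarith)
    refine ⟨x, hx, lt_of_lt_of_le ?_ hdiam⟩
    calc E * snakeWidth (fun x y : M => dist x y) x ≤ E * (1 / (3 * (E + 1))) := by gcongr
      _ < 1 / 3 := by rw [mul_one_div, div_lt_div_iff₀ (by positivity) (by norm_num)]; linarith
end
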